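/- For every integer q > 1, the identity (3/2)(S_{1²,q} - S_{2,q}) = (q+1) S_{1,q+1} - Σ_{j₁+j₂=q-1, j₁,j₂≥1} S_{1,j₁+1} ζ(j₂+1) holds, where S_{1²,q} := Σ_{n=1}^∞ H_n²/n^q, S_{2,q} := Σ_{n=1}^∞ H_n^{(2)}/n^q, and S_{1,r} := Σ_{n=1}^∞ H_n/n^r. -/

import Mathlib

/-- Riemann zeta value at a natural number argument. -/
noncomputable def zetaVal (m : ℕ) : ℝ :=
  ∑' n : ℕ, 1 / ((n : ℝ) + 1) ^ m

/-- Harmonic number `H_n`. -/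
noncomputable def H (n : ℕ) : ℝ := ∑ k ∈ Finset.Icc 1 n, 1 / (k : ℝ)

/-- Generalized harmonic number `H_n^{(2)}`. -/
noncomputable def H2 (n : ℕ) : ℝ := ∑ k ∈ Finset.Icc 1 n, 1 / (k : ℝ) ^ 2

/-- Linear Euler sum `S_{1,r}`. -/
noncomputable def S1 (r : ℕ) : ℝ := ∑' n : ℕ, H (n + 1) / ((n : ℝ) + 1) ^ r

open Finset Filter Topology

lemma H_zero : H 0 = 0 := by simp [H]
lemma H2_zero : H2 0 = 0 := by simp [H2]

lemma H_succ (n : ℕ) : H (n + 1) = H n + 1 / ((n : ℝ) + 1) := by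
  rw [H, H, Finset.sum_Icc_succ_top (Nat.le_add_left 1 n)]
  push_cast; ring

lemma H2_succ (n : ℕ) : H2 (n + 1) = H2 n + 1 / ((n : ℝ) + 1) ^ 2 := by
  rw [H2, H2, Finset.sum_Icc_succ_top (Nat.le_add_left 1 n)]
  push_cast; ring

lemma H_nonneg (n : ℕ) : 0 ≤ H n := by
  apply Finset.sum_nonneg; intro i _; positivity

lemma H2_nonneg (n : ℕ) : 0 ≤ H2 n := by
  apply Finset.sum_nonneg; intro i _; positivity

lemma one_le_H (n : ℕ) : 1 ≤ H (n + 1) := by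
  induction n with
  | zero => simp [H]
  | succ k ih =>
      rw [H_succ]
      push_cast
      have : (0:ℝ) ≤ 1 / ((k:ℝ) + 1 + 1) := by positivity
      linarith

lemma H2_le_H (n : ℕ) : H2 n ≤ H n := by
  apply Finset.sum_le_sum
  intro i hi
  simp only [Finset.mem_Icc] at hi
  have h1 : (1:ℝ) ≤ (i:ℝ) := by exact_mod_cast hi.1
  rw [div_le_div_iff₀ (by positivity) (by positivity)]
  nlinarith

lemma H_mono : Monotone H := by
  apply monotone_nat_of_le_succ
  intro n
  rw [H_succ]
  have : (0:ℝ) ≤ 1 / ((n:ℝ) + 1) := by positivity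
  linarith

/-- antitone property of H (n+1)/(n+1) -/
lemma a_antitone : Antitone (fun k : ℕ => H (k + 1) / ((k:ℝ) + 1)) := by
  apply antitone_nat_of_succ_le
  intro n
  show H (n + 1 + 1) / (((n+1:ℕ):ℝ) + 1) ≤ H (n + 1) / ((n:ℝ) + 1)
  rw [H_succ (n+1)]
  have h1 : (1:ℝ) ≤ H (n+1) := one_le_H n
  have h2 : (0:ℝ) < (n:ℝ) + 1 := by positivity
  have h3 : (0:ℝ) < (n:ℝ) + 1 + 1 := by positivity
  push_cast
  rw [div_le_div_iff₀ (by positivity) (by positivity)]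
  have h4 : 1 / ((n:ℝ) + 1 + 1) * ((n:ℝ) + 1 + 1) = 1 := by field_simp
  nlinarith [H_nonneg (n+1)]
lemma H_le_quart (n : ℕ) : H n ≤ 4 * (n:ℝ) ^ ((4:ℝ)⁻¹) := by
  induction n with
  | zero => simp [H_zero, Real.zero_rpow (by norm_num : ((4:ℝ)⁻¹) ≠ 0)]
  | succ n ih =>
      set a : ℝ := ((n:ℝ)+1) ^ ((4:ℝ)⁻¹) with ha
      set b : ℝ := (n:ℝ) ^ ((4:ℝ)⁻¹) with hb
      have hb0 : 0 ≤ b := Real.rpow_nonneg (by positivity) _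
      have hba : b ≤ a := by
        apply Real.rpow_le_rpow (by positivity) (by linarith [Nat.cast_nonneg (α := ℝ) n]) (by norm_num)
      have ha1 : 1 ≤ a := by
        apply Real.one_le_rpow (by linarith [Nat.cast_nonneg (α := ℝ) n]) (by norm_num)
      have ha4 : a ^ (4:ℕ) = (n:ℝ) + 1 := by
        rw [ha, ← Real.rpow_natCast (((n:ℝ)+1) ^ ((4:ℝ)⁻¹)) 4, ← Real.rpow_mul (by positivity)]
        norm_num
      have hb4 : b ^ (4:ℕ) = (n:ℝ) := by
        rw [hb, ← Real.rpow_natCast ((n:ℝ) ^ ((4:ℝ)⁻¹)) 4, ← Real.rpow_mul (by positivity)]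
        norm_num
      have key : 1 ≤ (a - b) * (4 * ((n:ℝ)+1)) := by
        have h1 : 1 ≤ (a - b) * (4 * a^3) := by nlinarith [sq_nonneg (a-b), sq_nonneg (a+b), sq_nonneg a, sq_nonneg b]
        have h2 : a^3 ≤ (n:ℝ)+1 := by nlinarith
        nlinarith
      have hinv : 1 / ((n:ℝ)+1) ≤ 4 * (a - b) := by
        rw [div_le_iff₀ (by positivity)]
        nlinarith
      rw [H_succ]
      push_cast
      calc H n + 1/((n:ℝ)+1) ≤ 4 * b + 4 * (a - b) := by push_cast at ih ⊢; linarith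
        _ = 4 * a := by ring

lemma summable_master : Summable (fun n : ℕ => H (n+1)^2 / ((n:ℝ)+1) ^ 2) := by
  have hs : Summable (fun n : ℕ => 16 / ((n:ℝ)+1) ^ ((3:ℝ)/2)) := by
    have h1 : Summable (fun n : ℕ => 1 / ((n:ℝ)) ^ ((3:ℝ)/2)) :=
      Real.summable_one_div_nat_rpow.2 (by norm_num)
    have h2 : Summable (fun n : ℕ => 1 / (((n+1):ℕ):ℝ) ^ ((3:ℝ)/2)) :=
      (summable_nat_add_iff 1).2 h1
    have h3 := h2.mul_left 16
    have he : (fun n : ℕ => 16 * (1 / (((n+1):ℕ):ℝ) ^ ((3:ℝ)/2))) = (fun n : ℕ => 16 / ((n:ℝ)+1) ^ ((3:ℝ)/2)) := by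
      funext n
      have : (((n+1):ℕ):ℝ) = (n:ℝ)+1 := by push_cast; ring
      rw [this]; ring
    rwa [he] at h3
  apply Summable.of_nonneg_of_le (fun n => by positivity) _ hs
  intro n
  have hH : H (n+1) ≤ 4 * (((n:ℝ)+1)) ^ ((4:ℝ)⁻¹) := by
    have := H_le_quart (n+1); push_cast at this; exact this
  have hH2 : H (n+1)^2 ≤ 16 * (((n:ℝ)+1)) ^ ((1:ℝ)/2) := by
    have h0 : 0 ≤ H (n+1) := H_nonneg _
    have : H (n+1)^2 ≤ (4 * (((n:ℝ)+1)) ^ ((4:ℝ)⁻¹))^2 := by nlinarith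
    calc H (n+1)^2 ≤ (4 * (((n:ℝ)+1)) ^ ((4:ℝ)⁻¹))^2 := this
      _ = 16 * ((((n:ℝ)+1)) ^ ((4:ℝ)⁻¹))^2 := by ring
      _ = 16 * (((n:ℝ)+1)) ^ ((1:ℝ)/2) := by
          rw [← Real.rpow_natCast ((((n:ℝ)+1)) ^ ((4:ℝ)⁻¹)) 2, ← Real.rpow_mul (by positivity)]
          norm_num
  rw [div_le_div_iff₀ (by positivity) (by positivity)]
  calc H (n+1)^2 * ((n:ℝ)+1) ^ ((3:ℝ)/2) ≤ (16 * (((n:ℝ)+1)) ^ ((1:ℝ)/2)) * ((n:ℝ)+1) ^ ((3:ℝ)/2) := by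
        apply mul_le_mul_of_nonneg_right hH2 (Real.rpow_nonneg (by positivity) _)
    _ = 16 * ((n:ℝ)+1) ^ (((1:ℝ)/2) + ((3:ℝ)/2)) := by rw [mul_assoc, ← Real.rpow_add (by positivity)]
    _ = 16 * ((n:ℝ)+1) ^ 2 := by norm_num
lemma tendsto_a_zero : Tendsto (fun k : ℕ => H (k+1) / ((k:ℝ)+1)) atTop (𝓝 0) := by
  have hb : Tendsto (fun k : ℕ => 4 / ((k:ℝ)+1) ^ ((3:ℝ)/4)) atTop (𝓝 0) := by
    apply Tendsto.div_atTop (tendsto_const_nhds)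
    apply Tendsto.comp (tendsto_rpow_atTop (by norm_num))
    exact tendsto_atTop_add_const_right _ 1 tendsto_natCast_atTop_atTop
  apply squeeze_zero (fun k => div_nonneg (H_nonneg _) (by positivity)) _ hb
  intro k
  have hH : H (k+1) ≤ 4 * (((k:ℝ)+1)) ^ ((4:ℝ)⁻¹) := by
    have := H_le_quart (k+1); push_cast at this; exact this
  rw [div_le_div_iff₀ (by positivity) (by positivity)]
  calc H (k+1) * ((k:ℝ)+1) ^ ((3:ℝ)/4) ≤ (4 * (((k:ℝ)+1)) ^ ((4:ℝ)⁻¹)) * ((k:ℝ)+1) ^ ((3:ℝ)/4) := by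
        apply mul_le_mul_of_nonneg_right hH (Real.rpow_nonneg (by positivity) _)
    _ = 4 * ((k:ℝ)+1) ^ ((4:ℝ)⁻¹ + (3:ℝ)/4) := by rw [mul_assoc, ← Real.rpow_add (by positivity)]
    _ = 4 * ((k:ℝ)+1) := by norm_num
lemma H_eq_range (d : ℕ) : H d = ∑ i ∈ range d, 1 / ((i:ℝ)+1) := by
  induction d with
  | zero => simp [H_zero]
  | succ n ih => rw [H_succ, Finset.sum_range_succ, ih]

lemma sumHdiv (j : ℕ) : ∑ i ∈ range j, H (i+1) / ((i:ℝ)+1) = (H j ^ 2 + H2 j) / 2 := by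
  induction j with
  | zero => simp [H_zero, H2_zero]
  | succ n ih =>
      rw [Finset.sum_range_succ, ih, H_succ, H2_succ]
      have hn : ((n:ℝ)+1) ≠ 0 := by positivity
      field_simp
      ring

lemma H_diff (n j : ℕ) : H (n + j) = H n + ∑ d ∈ range j, 1 / ((n:ℝ)+(d:ℝ)+1) := by
  induction j with
  | zero => simp
  | succ m ih =>
      have : n + (m+1) = (n+m) + 1 := by ring
      rw [this, H_succ, ih, Finset.sum_range_succ]
      push_cast
      ring

lemma sumInvRefl (n : ℕ) :
    ∑ j ∈ range (n+1), 1 / (((j:ℝ)+1) * ((n:ℝ)+1-(j:ℝ))) = 2 * H (n+1) / ((n:ℝ)+2) := by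
  have key : ∀ j ∈ range (n+1), 1 / (((j:ℝ)+1) * ((n:ℝ)+1-(j:ℝ)))
      = (1/((n:ℝ)+2)) * (1/((j:ℝ)+1) + 1/((n:ℝ)+1-(j:ℝ))) := by
    intro j hj
    have hj' : (j:ℝ) ≤ n := by
      have := Finset.mem_range.1 hj; exact_mod_cast Nat.lt_succ_iff.1 this
    have h1 : ((j:ℝ)+1) ≠ 0 := by positivity
    have h2 : ((n:ℝ)+1-(j:ℝ)) > 0 := by linarith
    have h3 : ((n:ℝ)+2) ≠ 0 := by positivity
    field_simp
    ring
  rw [Finset.sum_congr rfl key, ← Finset.mul_sum, Finset.sum_add_distrib]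
  have hrefl : ∑ j ∈ range (n+1), 1/((n:ℝ)+1-(j:ℝ)) = ∑ j ∈ range (n+1), 1/((j:ℝ)+1) := by
    rw [← Finset.sum_range_reflect]
    apply Finset.sum_congr rfl
    intro j hj
    have hj' : j ≤ n := Nat.lt_succ_iff.1 (Finset.mem_range.1 hj)
    have : ((n + 1 - 1 - j : ℕ):ℝ) = (n:ℝ) - (j:ℝ) := by
      have : n + 1 - 1 - j = n - j := by omega
      rw [this]; push_cast [Nat.cast_sub hj']; ring
    rw [this]
    ring_nf
  rw [hrefl, ← H_eq_range]
  ring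

lemma sumHrev (n : ℕ) :
    ∑ i ∈ range n, H (n - i) / ((i:ℝ)+1) = H (n+1) ^ 2 - H2 (n+1) := by
  induction n with
  | zero => norm_num [H, H2]
  | succ n ih =>
      have step1 : ∀ i ∈ range (n+1), H (n + 1 - i) / ((i:ℝ)+1)
          = H (n - i) / ((i:ℝ)+1) + 1 / (((i:ℝ)+1) * ((n:ℝ)+1-(i:ℝ))) := by
        intro i hi
        have hi' : i ≤ n := Nat.lt_succ_iff.1 (Finset.mem_range.1 hi)
        have h1 : n + 1 - i = (n - i) + 1 := by omega
        have h2 : ((n - i : ℕ):ℝ) = (n:ℝ) - (i:ℝ) := by push_cast [Nat.cast_sub hi']; ring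
        rw [h1, H_succ, h2]
        have h3 : ((i:ℝ)+1) ≠ 0 := by positivity
        have h4 : ((n:ℝ)-(i:ℝ)+1) > 0 := by
          have : (i:ℝ) ≤ n := by exact_mod_cast hi'
          linarith
        have h5 : ((n:ℝ)-(i:ℝ)+1) ≠ 0 := ne_of_gt h4
        have h6 : ((n:ℝ)+1-(i:ℝ)) ≠ 0 := by intro h; apply h5; linarith
        field_simp
        ring
      rw [Finset.sum_congr rfl step1, Finset.sum_add_distrib]
      have last0 : H (n - n) = 0 := by simp [H_zero]
      rw [Finset.sum_range_succ _ n, last0]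
      simp only [zero_div, add_zero]
      rw [ih, sumInvRefl, H_succ (n+1), H2_succ (n+1)]
      have hn : ((n:ℝ)+2) ≠ 0 := by positivity
      push_cast
      field_simp
      ring

lemma pf_range (s : ℕ) (x y : ℝ) (hx : x ≠ 0) (hy : y ≠ 0) (hxy : y - x ≠ 0) :
    1/(x^s*(y-x)) = (∑ i ∈ range s, 1/(y^(s-i)*x^(i+1))) + 1/(y^s*(y-x)) := by
  induction s with
  | zero => simp
  | succ s ih =>
      have hxs : x^s ≠ 0 := pow_ne_zero _ hx
      have hstep : (1:ℝ)/(x^(s+1)*(y-x)) = (1/x) * (1/(x^s*(y-x))) := by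
        rw [pow_succ]
        field_simp
      rw [hstep, ih, mul_add, Finset.mul_sum]
      rw [Finset.sum_range_succ' (fun i => 1/(y^(s+1-i)*x^(i+1))) s]
      have e1 : ∀ i ∈ range s, (1/x) * (1/(y^(s-i)*x^(i+1))) = 1/(y^(s+1-(i+1))*x^(i+1+1)) := by
        intro i hi
        have : s + 1 - (i+1) = s - i := by omega
        have hyi : y^(s-i) ≠ 0 := pow_ne_zero _ hy
        rw [this, pow_succ]
        field_simp
        ring
      rw [Finset.sum_congr rfl e1]
      have e2 : (1/x) * (1/(y^s*(y-x))) = 1/(y^(s+1-0)*x^(0+1)) + 1/(y^(s+1)*(y-x)) := by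
        simp only [Nat.sub_zero, pow_one, zero_add, pow_one]
        have hys : y^s ≠ 0 := pow_ne_zero _ hy
        have hys1 : y^(s+1) ≠ 0 := pow_ne_zero _ hy
        field_simp
        ring
      rw [e2]
      ring
lemma b_nonneg_of (b : ℕ → ℝ) (hb : Antitone b) (h0 : Tendsto b atTop (𝓝 0)) (n : ℕ) : 0 ≤ b n :=
  le_of_tendsto h0 (Filter.eventually_atTop.2 ⟨n, fun m hm => hb hm⟩)

lemma hasSum_telescope_one (b : ℕ → ℝ) (hb : Antitone b) (h0 : Tendsto b atTop (𝓝 0)) :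
    HasSum (fun k => b k - b (k+1)) (b 0) := by
  have hnn : ∀ k, 0 ≤ b k - b (k+1) := fun k => sub_nonneg.2 (hb (Nat.le_succ k))
  have hps : ∀ K, ∑ k ∈ range K, (b k - b (k+1)) = b 0 - b K := by
    intro K
    rw [Finset.sum_range_sub' b K]
  have hsummable : Summable (fun k => b k - b (k+1)) := by
    apply summable_of_sum_range_le hnn
    intro K
    rw [hps]
    have := b_nonneg_of b hb h0 K
    linarith
  have htend : Tendsto (fun K => ∑ k ∈ range K, (b k - b (k+1))) atTop (𝓝 (b 0)) := by
    simp only [hps]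
    have : Tendsto (fun K => b 0 - b K) atTop (𝓝 (b 0 - 0)) := tendsto_const_nhds.sub h0
    simpa using this
  have h1 := hsummable.hasSum
  have h2 := h1.tendsto_sum_nat
  have := tendsto_nhds_unique h2 htend
  rwa [this] at h1

lemma hasSum_telescope (b : ℕ → ℝ) (hb : Antitone b) (h0 : Tendsto b atTop (𝓝 0)) (j : ℕ) :
    HasSum (fun k => b k - b (k+j)) (∑ i ∈ range j, b i) := by
  induction j with
  | zero => simpa using hasSum_zero
  | succ j ih =>
      have hb' : Antitone (fun k => b (k + j)) := fun m n h => hb (by omega)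
      have h0' : Tendsto (fun k => b (k + j)) atTop (𝓝 0) :=
        h0.comp (tendsto_add_atTop_nat j)
      have h1 := hasSum_telescope_one (fun k => b (k + j)) hb' h0'
      simp only [zero_add] at h1
      have h2 := ih.add h1
      rw [Finset.sum_range_succ]
      convert h2 using 2 with k
      have : k + (j+1) = k + j + 1 := by omega
      rw [this]
      ring

lemma hasSum_L1 (d : ℕ) :
    HasSum (fun i : ℕ => 1/((((i:ℝ)+1))*(((i:ℝ)+1)+((d:ℝ)+1)))) (H (d+1) / ((d:ℝ)+1)) := by
  have hb : Antitone (fun k : ℕ => 1/((k:ℝ)+1)) := by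
    apply antitone_nat_of_succ_le
    intro n
    have h1 : (0:ℝ) < (n:ℝ)+1 := by positivity
    have h2 : (0:ℝ) < (n:ℝ)+1+1 := by positivity
    rw [div_le_div_iff₀ (by push_cast; linarith) h1]
    push_cast
    nlinarith
  have h0 : Tendsto (fun k : ℕ => 1/((k:ℝ)+1)) atTop (𝓝 0) := by
    apply Tendsto.div_atTop tendsto_const_nhds
    exact tendsto_atTop_add_const_right _ 1 tendsto_natCast_atTop_atTop
  have ht := hasSum_telescope _ hb h0 (d+1)
  have hsum : ∑ i ∈ range (d+1), 1/((i:ℝ)+1) = H (d+1) := (H_eq_range (d+1)).symm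
  rw [hsum] at ht
  have hd1 := ht.div_const ((d:ℝ)+1)
  have hfe : (fun i : ℕ => (1/((i:ℝ)+1) - 1/((((i+(d+1)) : ℕ) : ℝ) + 1))/((d:ℝ)+1))
      = (fun i : ℕ => 1/((((i:ℝ)+1))*(((i:ℝ)+1)+((d:ℝ)+1)))) := by
    funext i
    have h1 : (0:ℝ) < (i:ℝ)+1 := by positivity
    have h2 : (0:ℝ) < (i:ℝ)+1+((d:ℝ)+1) := by positivity
    have h3 : (((i + (d+1) : ℕ)):ℝ) + 1 = (i:ℝ)+1+((d:ℝ)+1) := by push_cast; ring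
    rw [h3]
    have e1 : ((i:ℝ)+1) ≠ 0 := ne_of_gt h1
    have e2 : ((i:ℝ)+1+((d:ℝ)+1)) ≠ 0 := ne_of_gt h2
    have e3 : ((d:ℝ)+1) ≠ 0 := by positivity
    field_simp
    ring
  rwa [hfe] at hd1

lemma hasSum_L2 (j : ℕ) :
    HasSum (fun i : ℕ => H (i+1+(j+1)) / ((((i:ℝ)+1))*(((i:ℝ)+1)+((j:ℝ)+1))))
      ((H (j+1)^2 + H2 (j+1)) / ((j:ℝ)+1)) := by
  have hA : HasSum (fun i : ℕ => ∑ d ∈ range (j+1), 1/((((i:ℝ)+1))*(((i:ℝ)+1)+((d:ℝ)+1))))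
      (∑ d ∈ range (j+1), H (d+1) / ((d:ℝ)+1)) := by
    apply hasSum_sum
    intro d _
    exact hasSum_L1 d
  rw [sumHdiv (j+1)] at hA
  have hB := hasSum_telescope (fun k : ℕ => H (k+1)/((k:ℝ)+1)) a_antitone tendsto_a_zero (j+1)
  rw [sumHdiv (j+1)] at hB
  have hAB := hA.add hB
  have hABd := hAB.div_const ((j:ℝ)+1)
  have hval : ((H (j+1)^2 + H2 (j+1))/2 + (H (j+1)^2 + H2 (j+1))/2) / ((j:ℝ)+1)
      = (H (j+1)^2 + H2 (j+1)) / ((j:ℝ)+1) := by ring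
  rw [hval] at hABd
  have hfe : (fun i : ℕ => ((∑ d ∈ range (j+1), 1/((((i:ℝ)+1))*(((i:ℝ)+1)+((d:ℝ)+1))))
        + (H (i+1)/((i:ℝ)+1) - H ((i+(j+1))+1)/((((i+(j+1)) : ℕ) : ℝ) + 1))) / ((j:ℝ)+1))
      = (fun i : ℕ => H (i+1+(j+1)) / ((((i:ℝ)+1))*(((i:ℝ)+1)+((j:ℝ)+1)))) := by
    funext i
    set k : ℝ := (i:ℝ)+1 with hk
    have hk0 : (0:ℝ) < k := by positivity
    have hjv0 : (0:ℝ) < (j:ℝ)+1 := by positivity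
    have hkj0 : (0:ℝ) < k + ((j:ℝ)+1) := by positivity
    have hsplit : ∑ d ∈ range (j+1), 1/(k*(k+((d:ℝ)+1)))
        = (H (i+1+(j+1)) - H (i+1))/k := by
      have hd := H_diff (i+1) (j+1)
      have hcast : ∀ d ∈ range (j+1), 1/(k*(k+((d:ℝ)+1)))
          = (1/k) * (1/((((i+1:ℕ)):ℝ)+(d:ℝ)+1)) := by
        intro d _
        have : (((i+1:ℕ)):ℝ)+(d:ℝ)+1 = k+((d:ℝ)+1) := by push_cast; ring
        rw [this, one_div, one_div, one_div, mul_inv]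
      rw [Finset.sum_congr rfl hcast, ← Finset.mul_sum]
      have : ∑ d ∈ range (j+1), 1/((((i+1:ℕ)):ℝ)+(d:ℝ)+1) = H (i+1+(j+1)) - H (i+1) := by
        rw [hd]; ring
      rw [this]
      ring
    have hBcast : H ((i+(j+1))+1)/((((i+(j+1)) : ℕ) : ℝ) + 1) = H (i+1+(j+1))/(k+((j:ℝ)+1)) := by
      have h1 : (i+(j+1))+1 = i+1+(j+1) := by omega
      have h2 : ((((i+(j+1)):ℕ)):ℝ)+1 = k+((j:ℝ)+1) := by push_cast; ring
      rw [h1, h2]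
    rw [hsplit, hBcast]
    have hK0 : k ≠ 0 := ne_of_gt hk0
    have hKj : k + ((j:ℝ)+1) ≠ 0 := ne_of_gt hkj0
    have hj1 : ((j:ℝ)+1) ≠ 0 := ne_of_gt hjv0
    field_simp
    ring
  rwa [hfe] at hABd
open ENNReal

noncomputable def SE (f : ℕ → ℝ) : ℝ≥0∞ := ∑' n, ENNReal.ofReal (f n)

noncomputable def DE (f : ℕ → ℕ → ℝ) : ℝ≥0∞ := ∑' p : ℕ × ℕ, ENNReal.ofReal (f p.1 p.2)

lemma SE_eq_ofReal {f : ℕ → ℝ} (hf : ∀ n, 0 ≤ f n) (h : Summable f) :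
    SE f = ENNReal.ofReal (∑' n, f n) := (ENNReal.ofReal_tsum_of_nonneg hf h).symm

lemma summable_of_SE_ne_top {f : ℕ → ℝ} (hf : ∀ n, 0 ≤ f n) (h : SE f ≠ ⊤) : Summable f := by
  have h2 := ENNReal.summable_toReal h
  have : (fun n => (ENNReal.ofReal (f n)).toReal) = f := by
    funext n; exact ENNReal.toReal_ofReal (hf n)
  rwa [this] at h2

lemma tsum_eq_SE_toReal {f : ℕ → ℝ} (hf : ∀ n, 0 ≤ f n) (h : SE f ≠ ⊤) :
    ∑' n, f n = (SE f).toReal := by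
  rw [SE_eq_ofReal hf (summable_of_SE_ne_top hf h)]
  rw [ENNReal.toReal_ofReal (tsum_nonneg hf)]

lemma SE_add (f g : ℕ → ℝ) (hf : ∀ n, 0 ≤ f n) (hg : ∀ n, 0 ≤ g n) :
    SE (fun n => f n + g n) = SE f + SE g := by
  unfold SE
  rw [← ENNReal.tsum_add]
  apply tsum_congr
  intro n
  exact ENNReal.ofReal_add (hf n) (hg n)

lemma SE_mono (f g : ℕ → ℝ) (h : ∀ n, f n ≤ g n) : SE f ≤ SE g := by
  apply ENNReal.tsum_le_tsum
  intro n
  exact ENNReal.ofReal_le_ofReal (h n)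

lemma SE_congr (f g : ℕ → ℝ) (h : ∀ n, f n = g n) : SE f = SE g := by
  unfold SE; exact tsum_congr fun n => by rw [h n]

/-- trichotomy split of a double sum -/
lemma tsum_prod_split (F : ℕ × ℕ → ℝ≥0∞) :
    ∑' p : ℕ × ℕ, F p
      = (∑' m : ℕ, F (m, m)) + (∑' p : ℕ × ℕ, F (p.1, p.1 + p.2 + 1))
        + (∑' p : ℕ × ℕ, F (p.1 + p.2 + 1, p.1)) := by
  have hsplit : ∀ p : ℕ × ℕ, F p = (if p.1 = p.2 then F p else 0)
      + (if p.1 < p.2 then F p else 0) + (if p.2 < p.1 then F p else 0) := by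
    intro p
    rcases lt_trichotomy p.1 p.2 with h | h | h
    · simp [h, ne_of_lt h, not_lt_of_gt h]
    · simp [h, lt_irrefl]
    · simp [h, (ne_of_lt h).symm, not_lt_of_gt h]
  rw [tsum_congr hsplit]
  rw [ENNReal.tsum_add, ENNReal.tsum_add]
  congr 1
  · congr 1
    · -- diagonal
      have hinj : Function.Injective (fun m : ℕ => ((m, m) : ℕ × ℕ)) := by
        intro a b h; simpa using congrArg Prod.fst h
      rw [← Function.Injective.tsum_eq hinj (f := fun p : ℕ × ℕ => if p.1 = p.2 then F p else 0)]
      · apply tsum_congr; intro m; simp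
      · intro p hp
        simp only [Function.mem_support] at hp
        by_cases h : p.1 = p.2
        · exact ⟨p.1, by ext <;> simp [h]⟩
        · simp [h] at hp
    · -- upper
      have hinj : Function.Injective (fun q : ℕ × ℕ => (q.1, q.1 + q.2 + 1)) := by
        intro a b h
        have h1 := congrArg Prod.fst h
        have h2 := congrArg Prod.snd h
        simp only at h1 h2
        ext
        · exact h1
        · omega
      rw [← Function.Injective.tsum_eq hinj (f := fun p : ℕ × ℕ => if p.1 < p.2 then F p else 0)]
      · apply tsum_congr; intro q; simp [Nat.lt_succ_iff]
      · intro p hp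
        simp only [Function.mem_support] at hp
        by_cases h : p.1 < p.2
        · exact ⟨(p.1, p.2 - p.1 - 1), by ext <;> simp <;> omega⟩
        · simp [h] at hp
  · -- lower
    have hinj : Function.Injective (fun q : ℕ × ℕ => ((q.1 + q.2 + 1, q.1) : ℕ × ℕ)) := by
      intro a b h
      have h1 := congrArg Prod.fst h
      have h2 := congrArg Prod.snd h
      simp only at h1 h2
      ext
      · exact h2
      · omega
    rw [← Function.Injective.tsum_eq hinj (f := fun p : ℕ × ℕ => if p.2 < p.1 then F p else 0)]
    · apply tsum_congr; intro q; simp [Nat.lt_succ_iff]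
    · intro p hp
      simp only [Function.mem_support] at hp
      by_cases h : p.2 < p.1
      · exact ⟨(p.2, p.1 - p.2 - 1), by ext <;> simp <;> omega⟩
      · simp [h] at hp

/-- group upper-triangular double sum by the outer (larger) index -/
lemma DE_group_outer (f : ℕ → ℕ → ℝ) :
    DE f = ∑' k : ℕ, ∑ m ∈ Finset.range k, ENNReal.ofReal (f m (k - m - 1)) := by
  unfold DE
  have hinj : Function.Injective (fun q : ℕ × ℕ => ((q.1 + q.2 + 1, q.1) : ℕ × ℕ)) := by
    intro a b h
    have h1 := congrArg Prod.fst h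
    have h2 := congrArg Prod.snd h
    simp only at h1 h2
    ext
    · exact h2
    · omega
  have key : ∑' p : ℕ × ℕ, ENNReal.ofReal (f p.1 p.2)
      = ∑' p : ℕ × ℕ, (if p.2 < p.1 then ENNReal.ofReal (f p.2 (p.1 - p.2 - 1)) else 0) := by
    rw [← Function.Injective.tsum_eq hinj
      (f := fun p : ℕ × ℕ => if p.2 < p.1 then ENNReal.ofReal (f p.2 (p.1 - p.2 - 1)) else 0)]
    · apply tsum_congr; intro q
      simp only
      rw [if_pos (by omega)]
      have hq : q.1 + q.2 + 1 - q.1 - 1 = q.2 := by omega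
      rw [hq]
    · intro p hp
      simp only [Function.mem_support] at hp
      by_cases h : p.2 < p.1
      · exact ⟨(p.2, p.1 - p.2 - 1), by ext <;> simp <;> omega⟩
      · simp [h] at hp
  rw [key]
  rw [ENNReal.tsum_prod (f := fun k m => if m < k then ENNReal.ofReal (f m (k - m - 1)) else 0)]
  apply tsum_congr
  intro k
  rw [tsum_eq_sum (s := Finset.range k) (by intro b hb; rw [if_neg (by simpa using hb)])]
  apply Finset.sum_congr rfl
  intro m hm
  rw [if_pos (Finset.mem_range.1 hm)]

/-- group upper-triangular double sum by total (larger) index keeping the gap -/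
lemma DE_group_gap (f : ℕ → ℕ → ℝ) :
    DE f = ∑' n : ℕ, ∑ i ∈ Finset.range n, ENNReal.ofReal (f (n - i - 1) i) := by
  unfold DE
  have hinj : Function.Injective (fun q : ℕ × ℕ => ((q.1 + q.2 + 1, q.2) : ℕ × ℕ)) := by
    intro a b h
    have h1 := congrArg Prod.fst h
    have h2 := congrArg Prod.snd h
    simp only at h1 h2
    ext
    · omega
    · exact h2
  have key : ∑' p : ℕ × ℕ, ENNReal.ofReal (f p.1 p.2)
      = ∑' p : ℕ × ℕ, (if p.2 < p.1 then ENNReal.ofReal (f (p.1 - p.2 - 1) p.2) else 0) := by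
    rw [← Function.Injective.tsum_eq hinj
      (f := fun p : ℕ × ℕ => if p.2 < p.1 then ENNReal.ofReal (f (p.1 - p.2 - 1) p.2) else 0)]
    · apply tsum_congr; intro q
      simp only
      rw [if_pos (by omega)]
      have hq : q.1 + q.2 + 1 - q.2 - 1 = q.1 := by omega
      rw [hq]
    · intro p hp
      simp only [Function.mem_support] at hp
      by_cases h : p.2 < p.1
      · exact ⟨(p.1 - p.2 - 1, p.2), by ext <;> simp <;> omega⟩
      · simp [h] at hp
  rw [key]
  rw [ENNReal.tsum_prod (f := fun n i => if i < n then ENNReal.ofReal (f (n - i - 1) i) else 0)]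
  apply tsum_congr
  intro n
  rw [tsum_eq_sum (s := Finset.range n) (by intro b hb; rw [if_neg (by simpa using hb)])]
  apply Finset.sum_congr rfl
  intro i hi
  rw [if_pos (Finset.mem_range.1 hi)]
lemma Omega_eval (q : ℕ) (hq : 2 ≤ q) :
    DE (fun m i => H (m+1) / (((m:ℝ)+1)^(q-1) * ((m:ℝ)+(i:ℝ)+2) * ((i:ℝ)+1)))
      = SE (fun n => H (n+1)^2 / ((n:ℝ)+1)^q) := by
  unfold DE SE
  rw [ENNReal.tsum_prod (f := fun (m i : ℕ) =>
    ENNReal.ofReal (H (m+1) / (((m:ℝ)+1)^(q-1) * ((m:ℝ)+(i:ℝ)+2) * ((i:ℝ)+1))))]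
  apply tsum_congr
  intro m
  have hc0 : 0 ≤ H (m+1)/((m:ℝ)+1)^(q-1) := by
    apply div_nonneg (H_nonneg _) (by positivity)
  have hterm : ∀ i : ℕ, H (m+1) / (((m:ℝ)+1)^(q-1) * ((m:ℝ)+(i:ℝ)+2) * ((i:ℝ)+1))
      = (H (m+1)/((m:ℝ)+1)^(q-1)) * (1/((((i:ℝ)+1))*(((i:ℝ)+1)+((m:ℝ)+1)))) := by
    intro i
    have h1 : (((m:ℝ)+1)^(q-1)) ≠ 0 := by positivity
    have h2 : ((m:ℝ)+(i:ℝ)+2) ≠ 0 := by positivity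
    have h3 : ((i:ℝ)+1) ≠ 0 := by positivity
    have h4 : (((i:ℝ)+1)+((m:ℝ)+1)) ≠ 0 := by positivity
    rw [show ((m:ℝ)+(i:ℝ)+2) = (((i:ℝ)+1)+((m:ℝ)+1)) from by ring, one_div, div_eq_mul_inv,
      div_eq_mul_inv, mul_inv, mul_inv, mul_inv]
    ring
  calc ∑' (i : ℕ), ENNReal.ofReal (H (m+1) / (((m:ℝ)+1)^(q-1) * ((m:ℝ)+(i:ℝ)+2) * ((i:ℝ)+1)))
      = ∑' i : ℕ, ENNReal.ofReal ((H (m+1)/((m:ℝ)+1)^(q-1))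
          * (1/((((i:ℝ)+1))*(((i:ℝ)+1)+((m:ℝ)+1))))) := by
        apply tsum_congr; intro i; rw [hterm i]
    _ = ENNReal.ofReal (H (m+1)/((m:ℝ)+1)^(q-1))
          * ∑' i : ℕ, ENNReal.ofReal (1/((((i:ℝ)+1))*(((i:ℝ)+1)+((m:ℝ)+1)))) := by
        rw [← ENNReal.tsum_mul_left]
        apply tsum_congr; intro i
        rw [ENNReal.ofReal_mul hc0]
    _ = ENNReal.ofReal (H (m+1)/((m:ℝ)+1)^(q-1)) * ENNReal.ofReal (H (m+1) / ((m:ℝ)+1)) := by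
        congr 1
        rw [← ENNReal.ofReal_tsum_of_nonneg (fun i => by positivity) (hasSum_L1 m).summable]
        rw [(hasSum_L1 m).tsum_eq]
    _ = ENNReal.ofReal (H (m+1)^2 / ((m:ℝ)+1)^q) := by
        rw [← ENNReal.ofReal_mul hc0]
        congr 1
        have hpow : ((m:ℝ)+1)^(q-1) * ((m:ℝ)+1) = ((m:ℝ)+1)^q := by
          rw [← pow_succ]
          congr 1
          omega
        rw [div_mul_div_comm, hpow]
        ring

lemma Omega'_eval (q : ℕ) (hq : 2 ≤ q) :
    DE (fun k i => H (k+i+2) / (((k:ℝ)+1)^(q-1) * ((k:ℝ)+(i:ℝ)+2) * ((i:ℝ)+1)))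
      = SE (fun n => (H (n+1)^2 + H2 (n+1)) / ((n:ℝ)+1)^q) := by
  unfold DE SE
  rw [ENNReal.tsum_prod (f := fun (k i : ℕ) =>
    ENNReal.ofReal (H (k+i+2) / (((k:ℝ)+1)^(q-1) * ((k:ℝ)+(i:ℝ)+2) * ((i:ℝ)+1))))]
  apply tsum_congr
  intro k
  have hc0 : (0:ℝ) ≤ 1/((k:ℝ)+1)^(q-1) := by positivity
  have hterm : ∀ i : ℕ, H (k+i+2) / (((k:ℝ)+1)^(q-1) * ((k:ℝ)+(i:ℝ)+2) * ((i:ℝ)+1))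
      = (1/((k:ℝ)+1)^(q-1))
        * (H (i+1+(k+1)) / ((((i:ℝ)+1))*(((i:ℝ)+1)+((k:ℝ)+1)))) := by
    intro i
    have hHe : k+i+2 = i+1+(k+1) := by omega
    rw [hHe]
    have h1 : (((k:ℝ)+1)^(q-1)) ≠ 0 := by positivity
    have h2 : ((k:ℝ)+(i:ℝ)+2) ≠ 0 := by positivity
    have h3 : ((i:ℝ)+1) ≠ 0 := by positivity
    have h4 : (((i:ℝ)+1)+((k:ℝ)+1)) ≠ 0 := by positivity
    rw [show ((k:ℝ)+(i:ℝ)+2) = (((i:ℝ)+1)+((k:ℝ)+1)) from by ring, one_div, div_eq_mul_inv,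
      div_eq_mul_inv, mul_inv, mul_inv, mul_inv]
    ring
  calc ∑' (i : ℕ), ENNReal.ofReal (H (k+i+2) / (((k:ℝ)+1)^(q-1) * ((k:ℝ)+(i:ℝ)+2) * ((i:ℝ)+1)))
      = ∑' i : ℕ, ENNReal.ofReal ((1/((k:ℝ)+1)^(q-1))
          * (H (i+1+(k+1)) / ((((i:ℝ)+1))*(((i:ℝ)+1)+((k:ℝ)+1))))) := by
        apply tsum_congr; intro i; rw [hterm i]
    _ = ENNReal.ofReal (1/((k:ℝ)+1)^(q-1))
          * ∑' i : ℕ, ENNReal.ofReal (H (i+1+(k+1)) / ((((i:ℝ)+1))*(((i:ℝ)+1)+((k:ℝ)+1)))) := by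
        rw [← ENNReal.tsum_mul_left]
        apply tsum_congr; intro i
        rw [ENNReal.ofReal_mul hc0]
    _ = ENNReal.ofReal (1/((k:ℝ)+1)^(q-1))
          * ENNReal.ofReal ((H (k+1)^2 + H2 (k+1)) / ((k:ℝ)+1)) := by
        congr 1
        rw [← ENNReal.ofReal_tsum_of_nonneg
          (fun i => div_nonneg (H_nonneg _) (by positivity)) (hasSum_L2 k).summable]
        rw [(hasSum_L2 k).tsum_eq]
    _ = ENNReal.ofReal ((H (k+1)^2 + H2 (k+1)) / ((k:ℝ)+1)^q) := by
        rw [← ENNReal.ofReal_mul hc0]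
        congr 1
        have hpow : ((k:ℝ)+1)^(q-1) * ((k:ℝ)+1) = ((k:ℝ)+1)^q := by
          rw [← pow_succ]
          congr 1
          omega
        rw [div_mul_div_comm, hpow]
        ring
lemma sum_Icc_one_eq_range (g : ℕ → ℝ) (n : ℕ) :
    ∑ j ∈ Icc 1 n, g j = ∑ i ∈ range n, g (i+1) := by
  induction n with
  | zero => simp
  | succ n ih => rw [Finset.sum_Icc_succ_top (by omega), ih, Finset.sum_range_succ]

lemma omega_term_expand (q : ℕ) (hq : 2 ≤ q) (Hv x y : ℝ) (hx : 0 < x) (hxy : x < y) :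
    Hv / (x^(q-1) * y * (y - x))
      = (∑ j ∈ Icc 1 (q-2), Hv / (x^(j+1) * y^(q-j))) + Hv/(x * y^q) + Hv/(y^q * (y-x)) := by
  have hy : 0 < y := lt_trans hx hxy
  have hyx : y - x ≠ 0 := by intro h; nlinarith
  have hx0 : x ≠ 0 := ne_of_gt hx
  have hy0 : y ≠ 0 := ne_of_gt hy
  have hpf := pf_range (q-1) x y hx0 hy0 hyx
  have step1 : Hv / (x^(q-1) * y * (y - x)) = (Hv/y) * (1/(x^(q-1)*(y-x))) := by
    simp only [div_eq_mul_inv, one_div, mul_inv]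
    ring
  rw [step1, hpf, mul_add, Finset.mul_sum]
  have hlast : (Hv/y) * (1/(y^(q-1)*(y-x))) = Hv/(y^q*(y-x)) := by
    have hpow : y^(q-1) * y = y^q := by
      rw [← pow_succ]; congr 1; omega
    rw [← hpow]
    simp only [div_eq_mul_inv, one_div, mul_inv]
    ring
  rw [hlast]
  congr 1
  -- now the sum part
  have hq1 : q - 1 = (q-2) + 1 := by omega
  rw [hq1, Finset.sum_range_succ']
  have hfirst : (Hv/y) * (1/(y^((q-2)+1-0)*x^(0+1))) = Hv/(x * y^q) := by
    have h2 : (q-2)+1-0 = q-1 := by omega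
    rw [h2]
    have hpow : y^(q-1) * y = y^q := by
      rw [← pow_succ]; congr 1; omega
    rw [← hpow]
    simp only [div_eq_mul_inv, one_div, mul_inv]
    ring
  rw [hfirst]
  congr 1
  rw [sum_Icc_one_eq_range]
  apply Finset.sum_congr rfl
  intro i hi
  have hiq : i < q - 2 := Finset.mem_range.1 hi
  have h2 : (q-2)+1-(i+1) = q-2-i := by omega
  rw [h2]
  have hpow : y^(q-2-i) * y = y^(q-(i+1)) := by
    rw [← pow_succ]; congr 1; omega
  rw [← hpow]
  simp only [div_eq_mul_inv, one_div, mul_inv]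
  ring

lemma Omega_expand (q : ℕ) (hq : 2 ≤ q) :
    DE (fun m i => H (m+1) / (((m:ℝ)+1)^(q-1) * ((m:ℝ)+(i:ℝ)+2) * ((i:ℝ)+1)))
      = (∑ j ∈ Icc 1 (q-2), DE (fun m i => H (m+1) / (((m:ℝ)+1)^(j+1) * ((m:ℝ)+(i:ℝ)+2)^(q-j))))
        + DE (fun m i => H (m+1) / (((m:ℝ)+1) * ((m:ℝ)+(i:ℝ)+2)^q))
        + DE (fun m i => H (m+1) / (((m:ℝ)+(i:ℝ)+2)^q * ((i:ℝ)+1))) := by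
  unfold DE
  rw [← Summable.tsum_finsetSum (fun j _ => ENNReal.summable)]
  rw [← ENNReal.tsum_add, ← ENNReal.tsum_add]
  apply tsum_congr
  intro p
  obtain ⟨m, i⟩ := p
  simp only
  have hx : (0:ℝ) < (m:ℝ)+1 := by positivity
  have hxy : (m:ℝ)+1 < (m:ℝ)+(i:ℝ)+2 := by
    have : (0:ℝ) ≤ (i:ℝ) := Nat.cast_nonneg i
    linarith
  have hexp := omega_term_expand q hq (H (m+1)) ((m:ℝ)+1) ((m:ℝ)+(i:ℝ)+2) hx hxy
  have hyx : ((m:ℝ)+(i:ℝ)+2) - ((m:ℝ)+1) = (i:ℝ)+1 := by ring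
  rw [hyx] at hexp
  rw [hexp]
  rw [ENNReal.ofReal_add
      (add_nonneg (Finset.sum_nonneg fun j _ => div_nonneg (H_nonneg _) (by positivity))
        (div_nonneg (H_nonneg _) (by positivity)))
      (div_nonneg (H_nonneg _) (by positivity)),
    ENNReal.ofReal_add
      (Finset.sum_nonneg fun j _ => div_nonneg (H_nonneg _) (by positivity))
      (div_nonneg (H_nonneg _) (by positivity))]
  congr 1
  congr 1
  rw [ENNReal.ofReal_sum_of_nonneg (fun j _ => by apply div_nonneg (H_nonneg _) (by positivity))]

lemma Omega'_expand (q : ℕ) (hq : 2 ≤ q) :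
    DE (fun k i => H (k+i+2) / (((k:ℝ)+1)^(q-1) * ((k:ℝ)+(i:ℝ)+2) * ((i:ℝ)+1)))
      = (∑ j ∈ Icc 1 (q-2), DE (fun k i => H (k+i+2) / (((k:ℝ)+(i:ℝ)+2)^(j+1) * ((k:ℝ)+1)^(q-j))))
        + DE (fun k i => H (k+i+2) / (((k:ℝ)+1) * ((k:ℝ)+(i:ℝ)+2)^q))
        + DE (fun k i => H (k+i+2) / (((k:ℝ)+(i:ℝ)+2)^q * ((i:ℝ)+1))) := by
  have main : DE (fun k i => H (k+i+2) / (((k:ℝ)+1)^(q-1) * ((k:ℝ)+(i:ℝ)+2) * ((i:ℝ)+1)))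
      = (∑ j ∈ Icc 1 (q-2), DE (fun k i => H (k+i+2) / (((k:ℝ)+1)^(j+1) * ((k:ℝ)+(i:ℝ)+2)^(q-j))))
        + DE (fun k i => H (k+i+2) / (((k:ℝ)+1) * ((k:ℝ)+(i:ℝ)+2)^q))
        + DE (fun k i => H (k+i+2) / (((k:ℝ)+(i:ℝ)+2)^q * ((i:ℝ)+1))) := by
    unfold DE
    rw [← Summable.tsum_finsetSum (fun j _ => ENNReal.summable)]
    rw [← ENNReal.tsum_add, ← ENNReal.tsum_add]
    apply tsum_congr
    intro p
    obtain ⟨k, i⟩ := p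
    simp only
    have hx : (0:ℝ) < (k:ℝ)+1 := by positivity
    have hxy : (k:ℝ)+1 < (k:ℝ)+(i:ℝ)+2 := by
      have : (0:ℝ) ≤ (i:ℝ) := Nat.cast_nonneg i
      linarith
    have hexp := omega_term_expand q hq (H (k+i+2)) ((k:ℝ)+1) ((k:ℝ)+(i:ℝ)+2) hx hxy
    have hyx : ((k:ℝ)+(i:ℝ)+2) - ((k:ℝ)+1) = (i:ℝ)+1 := by ring
    rw [hyx] at hexp
    rw [hexp]
    rw [ENNReal.ofReal_add
        (add_nonneg (Finset.sum_nonneg fun j _ => div_nonneg (H_nonneg _) (by positivity))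
          (div_nonneg (H_nonneg _) (by positivity)))
        (div_nonneg (H_nonneg _) (by positivity)),
      ENNReal.ofReal_add
        (Finset.sum_nonneg fun j _ => div_nonneg (H_nonneg _) (by positivity))
        (div_nonneg (H_nonneg _) (by positivity))]
    congr 1
    congr 1
    rw [ENNReal.ofReal_sum_of_nonneg (fun j _ => by apply div_nonneg (H_nonneg _) (by positivity))]
  rw [main]
  congr 2
  -- reflect the Icc sum: j ↦ q-1-j
  apply Finset.sum_nbij' (fun j => q-1-j) (fun j => q-1-j)
  · intro j hj; simp only [Finset.mem_Icc] at hj ⊢; omega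
  · intro j hj; simp only [Finset.mem_Icc] at hj ⊢; omega
  · intro j hj; simp only [Finset.mem_Icc] at hj; omega
  · intro j hj; simp only [Finset.mem_Icc] at hj; omega
  · intro j hj
    simp only [Finset.mem_Icc] at hj
    have e1 : q - (q-1-j) = j+1 := by omega
    have e2 : (q-1-j)+1 = q-j := by omega
    rw [e1, e2]
    unfold DE
    apply tsum_congr
    intro p
    obtain ⟨a, b⟩ := p
    dsimp only
    congr 1
    rw [mul_comm]
lemma T1_eval (q : ℕ) :
    DE (fun m i => H (m+1) / (((m:ℝ)+1) * ((m:ℝ)+(i:ℝ)+2)^q))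
      = SE (fun k => (H k^2 + H2 k) / (2*((k:ℝ)+1)^q)) := by
  rw [DE_group_outer]
  unfold SE
  apply tsum_congr
  intro k
  have hterm : ∀ m ∈ range k, H (m+1) / (((m:ℝ)+1) * (((m:ℝ)+((k-m-1:ℕ):ℝ)+2))^q)
      = (1/((k:ℝ)+1)^q) * (H (m+1)/((m:ℝ)+1)) := by
    intro m hm
    have hmk : m + 1 ≤ k := Finset.mem_range.1 hm
    have hc : ((m:ℝ)+((k-m-1:ℕ):ℝ)+2) = (k:ℝ)+1 := by
      have h1 : (k - m - 1 : ℕ) = k - (m+1) := by omega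
      rw [h1, Nat.cast_sub hmk]
      push_cast
      ring
    rw [hc]
    simp only [div_eq_mul_inv, one_div, mul_inv]
    ring
  calc ∑ m ∈ range k, ENNReal.ofReal (H (m+1) / (((m:ℝ)+1) * ((m:ℝ)+((k-m-1:ℕ):ℝ)+2)^q))
      = ∑ m ∈ range k, ENNReal.ofReal ((1/((k:ℝ)+1)^q) * (H (m+1)/((m:ℝ)+1))) :=
        Finset.sum_congr rfl (fun m hm => by rw [hterm m hm])
    _ = ENNReal.ofReal (∑ m ∈ range k, (1/((k:ℝ)+1)^q) * (H (m+1)/((m:ℝ)+1))) := by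
        rw [ENNReal.ofReal_sum_of_nonneg]
        intro m _
        exact mul_nonneg (by positivity) (div_nonneg (H_nonneg _) (by positivity))
    _ = ENNReal.ofReal ((H k^2 + H2 k) / (2*((k:ℝ)+1)^q)) := by
        congr 1
        rw [← Finset.mul_sum, sumHdiv k]
        simp only [div_eq_mul_inv, one_div, mul_inv]
        ring

lemma T2_eval (q : ℕ) :
    DE (fun m i => H (m+1) / (((m:ℝ)+(i:ℝ)+2)^q * ((i:ℝ)+1)))
      = SE (fun n => (H (n+1)^2 - H2 (n+1)) / ((n:ℝ)+1)^q) := by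
  rw [DE_group_gap]
  unfold SE
  apply tsum_congr
  intro n
  have hterm : ∀ i ∈ range n, H ((n-i-1)+1) / ((((n-i-1:ℕ):ℝ)+(i:ℝ)+2)^q * ((i:ℝ)+1))
      = (1/((n:ℝ)+1)^q) * (H (n-i)/((i:ℝ)+1)) := by
    intro i hi
    have hin : i + 1 ≤ n := Finset.mem_range.1 hi
    have h1 : (n-i-1)+1 = n-i := by omega
    have hc : (((n-i-1:ℕ):ℝ)+(i:ℝ)+2) = (n:ℝ)+1 := by
      have h2 : (n - i - 1 : ℕ) = n - (i+1) := by omega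
      rw [h2, Nat.cast_sub hin]
      push_cast
      ring
    rw [h1, hc]
    simp only [div_eq_mul_inv, one_div, mul_inv]
    ring
  calc ∑ i ∈ range n, ENNReal.ofReal (H ((n-i-1)+1) / ((((n-i-1:ℕ):ℝ)+(i:ℝ)+2)^q * ((i:ℝ)+1)))
      = ∑ i ∈ range n, ENNReal.ofReal ((1/((n:ℝ)+1)^q) * (H (n-i)/((i:ℝ)+1))) :=
        Finset.sum_congr rfl (fun i hi => by rw [hterm i hi])
    _ = ENNReal.ofReal (∑ i ∈ range n, (1/((n:ℝ)+1)^q) * (H (n-i)/((i:ℝ)+1))) := by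
        rw [ENNReal.ofReal_sum_of_nonneg]
        intro i _
        exact mul_nonneg (by positivity) (div_nonneg (H_nonneg _) (by positivity))
    _ = ENNReal.ofReal ((H (n+1)^2 - H2 (n+1)) / ((n:ℝ)+1)^q) := by
        congr 1
        rw [← Finset.mul_sum, sumHrev n]
        simp only [div_eq_mul_inv, one_div, mul_inv]
        ring

lemma T3_eval (q : ℕ) :
    DE (fun k i => H (k+i+2) / (((k:ℝ)+1) * ((k:ℝ)+(i:ℝ)+2)^q))
      = SE (fun n => H (n+1) * H n / ((n:ℝ)+1)^q) := by
  rw [DE_group_gap]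
  unfold SE
  apply tsum_congr
  intro n
  have hterm : ∀ i ∈ range n, H ((n-i-1)+i+2) / ((((n-i-1:ℕ):ℝ)+1) * (((n-i-1:ℕ):ℝ)+(i:ℝ)+2)^q)
      = (H (n+1)/((n:ℝ)+1)^q) * (1/(((n-1-i:ℕ):ℝ)+1)) := by
    intro i hi
    have hin : i + 1 ≤ n := Finset.mem_range.1 hi
    have h1 : (n-i-1)+i+2 = n+1 := by omega
    have hc : (((n-i-1:ℕ):ℝ)+(i:ℝ)+2) = (n:ℝ)+1 := by
      have h2 : (n - i - 1 : ℕ) = n - (i+1) := by omega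
      rw [h2, Nat.cast_sub hin]
      push_cast
      ring
    have h3 : (n-1-i : ℕ) = n-i-1 := by omega
    rw [h1, hc, h3]
    simp only [div_eq_mul_inv, one_div, mul_inv]
    ring
  calc ∑ i ∈ range n, ENNReal.ofReal (H ((n-i-1)+i+2) / ((((n-i-1:ℕ):ℝ)+1) * (((n-i-1:ℕ):ℝ)+(i:ℝ)+2)^q))
      = ∑ i ∈ range n, ENNReal.ofReal ((H (n+1)/((n:ℝ)+1)^q) * (1/(((n-1-i:ℕ):ℝ)+1))) :=
        Finset.sum_congr rfl (fun i hi => by rw [hterm i hi])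
    _ = ENNReal.ofReal (∑ i ∈ range n, (H (n+1)/((n:ℝ)+1)^q) * (1/(((n-1-i:ℕ):ℝ)+1))) := by
        rw [ENNReal.ofReal_sum_of_nonneg]
        intro i _
        exact mul_nonneg (div_nonneg (H_nonneg _) (by positivity)) (by positivity)
    _ = ENNReal.ofReal (H (n+1) * H n / ((n:ℝ)+1)^q) := by
        congr 1
        rw [← Finset.mul_sum]
        rw [Finset.sum_range_reflect (fun i => 1/((i:ℝ)+1)) n]
        rw [← H_eq_range n]
        simp only [div_eq_mul_inv, one_div, mul_inv]
        ring

lemma T4_eval (q : ℕ) :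
    DE (fun k i => H (k+i+2) / (((k:ℝ)+(i:ℝ)+2)^q * ((i:ℝ)+1)))
      = SE (fun n => H (n+1) * H n / ((n:ℝ)+1)^q) := by
  rw [DE_group_gap]
  unfold SE
  apply tsum_congr
  intro n
  have hterm : ∀ i ∈ range n, H ((n-i-1)+i+2) / ((((n-i-1:ℕ):ℝ)+(i:ℝ)+2)^q * ((i:ℝ)+1))
      = (H (n+1)/((n:ℝ)+1)^q) * (1/((i:ℝ)+1)) := by
    intro i hi
    have hin : i + 1 ≤ n := Finset.mem_range.1 hi
    have h1 : (n-i-1)+i+2 = n+1 := by omega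
    have hc : (((n-i-1:ℕ):ℝ)+(i:ℝ)+2) = (n:ℝ)+1 := by
      have h2 : (n - i - 1 : ℕ) = n - (i+1) := by omega
      rw [h2, Nat.cast_sub hin]
      push_cast
      ring
    rw [h1, hc]
    simp only [div_eq_mul_inv, one_div, mul_inv]
    ring
  calc ∑ i ∈ range n, ENNReal.ofReal (H ((n-i-1)+i+2) / ((((n-i-1:ℕ):ℝ)+(i:ℝ)+2)^q * ((i:ℝ)+1)))
      = ∑ i ∈ range n, ENNReal.ofReal ((H (n+1)/((n:ℝ)+1)^q) * (1/((i:ℝ)+1))) :=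
        Finset.sum_congr rfl (fun i hi => by rw [hterm i hi])
    _ = ENNReal.ofReal (∑ i ∈ range n, (H (n+1)/((n:ℝ)+1)^q) * (1/((i:ℝ)+1))) := by
        rw [ENNReal.ofReal_sum_of_nonneg]
        intro i _
        exact mul_nonneg (div_nonneg (H_nonneg _) (by positivity)) (by positivity)
    _ = ENNReal.ofReal (H (n+1) * H n / ((n:ℝ)+1)^q) := by
        congr 1
        rw [← Finset.mul_sum, ← H_eq_range n]
        simp only [div_eq_mul_inv, one_div, mul_inv]
        ring

lemma Z_split (q j : ℕ) (hq : 2 ≤ q) (hj1 : 1 ≤ j) (hj2 : j ≤ q-2) :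
    SE (fun n => H (n+1)/((n:ℝ)+1)^(j+1)) * SE (fun n => 1/((n:ℝ)+1)^(q-j))
      = SE (fun n => H (n+1)/((n:ℝ)+1)^(q+1))
        + DE (fun m i => H (m+1) / (((m:ℝ)+1)^(j+1) * ((m:ℝ)+(i:ℝ)+2)^(q-j)))
        + DE (fun k i => H (k+i+2) / (((k:ℝ)+(i:ℝ)+2)^(j+1) * ((k:ℝ)+1)^(q-j))) := by
  unfold SE DE
  have hprod : (∑' n : ℕ, ENNReal.ofReal (H (n+1)/((n:ℝ)+1)^(j+1)))
      * (∑' n : ℕ, ENNReal.ofReal (1/((n:ℝ)+1)^(q-j)))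
      = ∑' p : ℕ × ℕ, (ENNReal.ofReal (H (p.1+1)/((p.1:ℝ)+1)^(j+1))
          * ENNReal.ofReal (1/((p.2:ℝ)+1)^(q-j))) := by
    rw [ENNReal.tsum_prod (f := fun (m k : ℕ) => ENNReal.ofReal (H (m+1)/((m:ℝ)+1)^(j+1))
      * ENNReal.ofReal (1/((k:ℝ)+1)^(q-j)))]
    rw [← ENNReal.tsum_mul_right]
    apply tsum_congr
    intro m
    rw [ENNReal.tsum_mul_left]
  rw [hprod]
  rw [tsum_prod_split]
  congr 1
  · congr 1
    · -- diagonal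
      apply tsum_congr
      intro m
      rw [← ENNReal.ofReal_mul (div_nonneg (H_nonneg _) (by positivity))]
      congr 1
      have hpow : ((m:ℝ)+1)^(j+1) * ((m:ℝ)+1)^(q-j) = ((m:ℝ)+1)^(q+1) := by
        rw [← pow_add]
        congr 1
        omega
      rw [div_mul_div_comm, hpow]
      ring
    · -- upper triangle
      apply tsum_congr
      intro p
      rw [← ENNReal.ofReal_mul (div_nonneg (H_nonneg _) (by positivity))]
      congr 1
      have hc : ((p.1+p.2+1:ℕ):ℝ)+1 = (p.1:ℝ)+(p.2:ℝ)+2 := by push_cast; ring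
      rw [hc]
      rw [div_mul_div_comm]
      ring
  · -- lower triangle
    apply tsum_congr
    intro p
    rw [← ENNReal.ofReal_mul (div_nonneg (H_nonneg _) (by positivity))]
    congr 1
    have hc : ((p.1+p.2+1:ℕ):ℝ)+1 = (p.1:ℝ)+(p.2:ℝ)+2 := by push_cast; ring
    have hH : (p.1+p.2+1)+1 = p.1+p.2+2 := by omega
    rw [hc, hH]
    rw [div_mul_div_comm]
    ring
lemma toReal_add3 (a b c : ℝ≥0∞) (ha : a ≠ ⊤) (hb : b ≠ ⊤) (hc : c ≠ ⊤) :
    (a + b + c).toReal = a.toReal + b.toReal + c.toReal := by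
  rw [ENNReal.toReal_add (by finiteness) hc, ENNReal.toReal_add ha hb]

theorem quadratic_euler_sum_relation_one (q : ℕ) (hq : 1 < q) :
    (3 / 2 : ℝ) * ((∑' n : ℕ, (H (n + 1)) ^ 2 / ((n : ℝ) + 1) ^ q)
        - ∑' n : ℕ, H2 (n + 1) / ((n : ℝ) + 1) ^ q)
      = ((q : ℝ) + 1) * S1 (q + 1)
        - ∑ j ∈ Finset.Icc 1 (q - 2), S1 (j + 1) * zetaVal (q - j) := by
  have hq2 : 2 ≤ q := hq
  have one_le_cast : ∀ n : ℕ, (1:ℝ) ≤ (n:ℝ)+1 := fun n => by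
    have : (0:ℝ) ≤ (n:ℝ) := Nat.cast_nonneg n
    linarith
  -- nonnegativity facts
  have hXnn : ∀ n : ℕ, (0:ℝ) ≤ H (n+1)^2 / ((n:ℝ)+1)^q := fun n => by
    apply div_nonneg (by positivity) (by positivity)
  have hYnn : ∀ n : ℕ, (0:ℝ) ≤ H2 (n+1) / ((n:ℝ)+1)^q := fun n =>
    div_nonneg (H2_nonneg _) (by positivity)
  have hPnn : ∀ n : ℕ, (0:ℝ) ≤ (H (n+1)^2 - H2 (n+1)) / ((n:ℝ)+1)^q := by
    intro n
    apply div_nonneg _ (by positivity)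
    have h1 : H2 (n+1) ≤ H (n+1) := H2_le_H _
    have h2 : (1:ℝ) ≤ H (n+1) := one_le_H n
    nlinarith
  have hT1nn : ∀ k : ℕ, (0:ℝ) ≤ (H k^2 + H2 k) / (2*((k:ℝ)+1)^q) := fun k => by
    apply div_nonneg _ (by positivity)
    have := H2_nonneg k
    nlinarith [sq_nonneg (H k)]
  have hT3nn : ∀ n : ℕ, (0:ℝ) ≤ H (n+1) * H n / ((n:ℝ)+1)^q := fun n =>
    div_nonneg (mul_nonneg (H_nonneg _) (H_nonneg _)) (by positivity)
  have hSnn : ∀ r : ℕ, ∀ n : ℕ, (0:ℝ) ≤ H (n+1)/((n:ℝ)+1)^r := fun r n =>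
    div_nonneg (H_nonneg _) (by positivity)
  have hznn : ∀ s : ℕ, ∀ n : ℕ, (0:ℝ) ≤ 1/((n:ℝ)+1)^s := fun s n => by positivity
  -- master finiteness
  have hX2fin : SE (fun n => H (n+1)^2 / ((n:ℝ)+1)^2) ≠ ⊤ := by
    rw [SE_eq_ofReal (fun n => div_nonneg (by positivity) (by positivity)) summable_master]
    exact ENNReal.ofReal_ne_top
  have hboundX2 : ∀ (f : ℕ → ℝ), (∀ n, f n ≤ H (n+1)^2/((n:ℝ)+1)^2) → SE f ≠ ⊤ := by
    intro f hf
    exact ne_top_of_le_ne_top hX2fin (SE_mono _ _ hf)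
  have hpowmono : ∀ (r : ℕ), 2 ≤ r → ∀ (n : ℕ), ((n:ℝ)+1)^2 ≤ ((n:ℝ)+1)^r := by
    intro r hr n
    exact pow_le_pow_right₀ (one_le_cast n) hr
  have hHsq : ∀ n : ℕ, (1:ℝ) ≤ H (n+1)^2 := by
    intro n
    have := one_le_H n
    nlinarith
  have hXfin : SE (fun n => H (n+1)^2 / ((n:ℝ)+1)^q) ≠ ⊤ := by
    apply hboundX2
    intro n
    exact div_le_div_of_nonneg_left (by positivity) (by positivity) (hpowmono q hq2 n)
  have hYfin : SE (fun n => H2 (n+1) / ((n:ℝ)+1)^q) ≠ ⊤ := by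
    apply hboundX2
    intro n
    apply div_le_div₀ (by positivity) _ (by positivity) (hpowmono q hq2 n)
    have h1 := H2_le_H (n+1)
    have h2 := one_le_H n
    nlinarith
  have hSfin : ∀ r : ℕ, 2 ≤ r → SE (fun n => H (n+1)/((n:ℝ)+1)^r) ≠ ⊤ := by
    intro r hr
    apply hboundX2
    intro n
    apply div_le_div₀ (by positivity) _ (by positivity) (hpowmono r hr n)
    have h2 := one_le_H n
    nlinarith
  have hzfin : ∀ s : ℕ, 2 ≤ s → SE (fun n => 1/((n:ℝ)+1)^s) ≠ ⊤ := by
    intro s hs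
    apply hboundX2
    intro n
    exact div_le_div₀ (by positivity) (hHsq n) (by positivity) (hpowmono s hs n)
  -- ENNReal identities
  have eI : SE (fun n => H (n+1)^2 / ((n:ℝ)+1)^q)
      = (∑ j ∈ Icc 1 (q-2), DE (fun m i => H (m+1) / (((m:ℝ)+1)^(j+1) * ((m:ℝ)+(i:ℝ)+2)^(q-j))))
        + SE (fun k => (H k^2 + H2 k) / (2*((k:ℝ)+1)^q))
        + SE (fun n => (H (n+1)^2 - H2 (n+1)) / ((n:ℝ)+1)^q) := by
    rw [← Omega_eval q hq2, Omega_expand q hq2, T1_eval q, T2_eval q]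
  have eII : SE (fun n => H (n+1)^2 / ((n:ℝ)+1)^q)
      = SE (fun n => (H (n+1)^2 - H2 (n+1)) / ((n:ℝ)+1)^q)
        + SE (fun n => H2 (n+1) / ((n:ℝ)+1)^q) := by
    rw [← SE_add _ _ hPnn hYnn]
    apply SE_congr
    intro n
    rw [← add_div, sub_add_cancel]
  have eIII : SE (fun n => H (n+1)^2 / ((n:ℝ)+1)^q) + SE (fun n => H2 (n+1) / ((n:ℝ)+1)^q)
      = (∑ j ∈ Icc 1 (q-2), DE (fun k i => H (k+i+2) / (((k:ℝ)+(i:ℝ)+2)^(j+1) * ((k:ℝ)+1)^(q-j))))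
        + SE (fun n => H (n+1) * H n / ((n:ℝ)+1)^q)
        + SE (fun n => H (n+1) * H n / ((n:ℝ)+1)^q) := by
    have h1 := Omega'_expand q hq2
    rw [Omega'_eval q hq2, T3_eval q, T4_eval q] at h1
    rw [← h1, ← SE_add _ _ hXnn hYnn]
    apply SE_congr
    intro n
    rw [← add_div]
  have eIV : SE (fun n => H (n+1) * H n / ((n:ℝ)+1)^q) + SE (fun n => H (n+1)/((n:ℝ)+1)^(q+1))
      = SE (fun n => H (n+1)^2 / ((n:ℝ)+1)^q) := by
    rw [← SE_add _ _ hT3nn (hSnn (q+1))]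
    apply SE_congr
    intro n
    rw [pow_succ, H_succ n]
    have h1 : ((n:ℝ)+1) ≠ 0 := by positivity
    have h2 : ((n:ℝ)+1)^q ≠ 0 := by positivity
    field_simp
  have eV : SE (fun n => H2 (n+1) / ((n:ℝ)+1)^q) + SE (fun n => H2 (n+1) / ((n:ℝ)+1)^q)
        + SE (fun n => (H (n+1)^2 - H2 (n+1)) / ((n:ℝ)+1)^q)
      = SE (fun k => (H k^2 + H2 k) / (2*((k:ℝ)+1)^q))
        + SE (fun k => (H k^2 + H2 k) / (2*((k:ℝ)+1)^q))
        + SE (fun n => H (n+1)/((n:ℝ)+1)^(q+1)) + SE (fun n => H (n+1)/((n:ℝ)+1)^(q+1)) := by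
    rw [← SE_add _ _ hYnn hYnn, ← SE_add _ _ (fun n => add_nonneg (hYnn n) (hYnn n)) hPnn]
    rw [← SE_add _ _ hT1nn hT1nn,
      ← SE_add _ _ (fun n => add_nonneg (hT1nn n) (hT1nn n)) (hSnn (q+1)),
      ← SE_add _ _ (fun n => add_nonneg (add_nonneg (hT1nn n) (hT1nn n)) (hSnn (q+1) n)) (hSnn (q+1))]
    apply SE_congr
    intro n
    rw [pow_succ, H_succ n, H2_succ n]
    have h1 : ((n:ℝ)+1) ≠ 0 := by positivity
    have h2 : ((n:ℝ)+1)^q ≠ 0 := by positivity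
    field_simp
    ring
  have eVI : (∑ j ∈ Icc 1 (q-2),
        SE (fun n => H (n+1)/((n:ℝ)+1)^(j+1)) * SE (fun n => 1/((n:ℝ)+1)^(q-j)))
      = (q-2) • SE (fun n => H (n+1)/((n:ℝ)+1)^(q+1))
        + (∑ j ∈ Icc 1 (q-2), DE (fun m i => H (m+1) / (((m:ℝ)+1)^(j+1) * ((m:ℝ)+(i:ℝ)+2)^(q-j))))
        + (∑ j ∈ Icc 1 (q-2), DE (fun k i => H (k+i+2) / (((k:ℝ)+(i:ℝ)+2)^(j+1) * ((k:ℝ)+1)^(q-j)))) := by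
    rw [Finset.sum_congr rfl (fun j hj => Z_split q j hq2 (Finset.mem_Icc.1 hj).1 (Finset.mem_Icc.1 hj).2)]
    rw [Finset.sum_add_distrib, Finset.sum_add_distrib, Finset.sum_const, Nat.card_Icc]
    norm_num
  -- finiteness of the remaining quantities
  have hXYfin : SE (fun n => H (n+1)^2 / ((n:ℝ)+1)^q) + SE (fun n => H2 (n+1) / ((n:ℝ)+1)^q) ≠ ⊤ :=
    ENNReal.add_ne_top.2 ⟨hXfin, hYfin⟩
  have hD2fin : (∑ j ∈ Icc 1 (q-2),
      DE (fun m i => H (m+1) / (((m:ℝ)+1)^(j+1) * ((m:ℝ)+(i:ℝ)+2)^(q-j)))) ≠ ⊤ := by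
    apply ne_top_of_le_ne_top hXfin
    rw [eI]
    exact le_self_add.trans le_self_add
  have hT1fin : SE (fun k => (H k^2 + H2 k) / (2*((k:ℝ)+1)^q)) ≠ ⊤ := by
    apply ne_top_of_le_ne_top hXfin
    rw [eI]
    exact le_add_self.trans le_self_add
  have hPfin : SE (fun n => (H (n+1)^2 - H2 (n+1)) / ((n:ℝ)+1)^q) ≠ ⊤ := by
    apply ne_top_of_le_ne_top hXfin
    rw [eI]
    exact le_add_self
  have hD1fin : (∑ j ∈ Icc 1 (q-2),
      DE (fun k i => H (k+i+2) / (((k:ℝ)+(i:ℝ)+2)^(j+1) * ((k:ℝ)+1)^(q-j)))) ≠ ⊤ := by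
    apply ne_top_of_le_ne_top hXYfin
    rw [eIII]
    exact le_self_add.trans le_self_add
  have hT3fin : SE (fun n => H (n+1) * H n / ((n:ℝ)+1)^q) ≠ ⊤ := by
    apply ne_top_of_le_ne_top hXYfin
    rw [eIII]
    exact le_add_self
  have hSq1fin : SE (fun n => H (n+1)/((n:ℝ)+1)^(q+1)) ≠ ⊤ := hSfin (q+1) (by omega)
  -- real values
  set x := (SE (fun n => H (n+1)^2 / ((n:ℝ)+1)^q)).toReal with hx
  set y := (SE (fun n => H2 (n+1) / ((n:ℝ)+1)^q)).toReal with hy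
  set p := (SE (fun n => (H (n+1)^2 - H2 (n+1)) / ((n:ℝ)+1)^q)).toReal with hp
  set t1 := (SE (fun k => (H k^2 + H2 k) / (2*((k:ℝ)+1)^q))).toReal with ht1
  set t3 := (SE (fun n => H (n+1) * H n / ((n:ℝ)+1)^q)).toReal with ht3
  set s := (SE (fun n => H (n+1)/((n:ℝ)+1)^(q+1))).toReal with hs
  set d1 := (∑ j ∈ Icc 1 (q-2),
      DE (fun k i => H (k+i+2) / (((k:ℝ)+(i:ℝ)+2)^(j+1) * ((k:ℝ)+1)^(q-j)))).toReal with hd1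
  set d2 := (∑ j ∈ Icc 1 (q-2),
      DE (fun m i => H (m+1) / (((m:ℝ)+1)^(j+1) * ((m:ℝ)+(i:ℝ)+2)^(q-j)))).toReal with hd2
  -- real identities
  have rI : x = d2 + t1 + p := by
    rw [hx, eI, toReal_add3 _ _ _ hD2fin hT1fin hPfin]
  have rII : x = p + y := by
    rw [hx, eII, ENNReal.toReal_add hPfin hYfin]
  have rIII : x + y = d1 + t3 + t3 := by
    rw [hx, hy, ← ENNReal.toReal_add hXfin hYfin, eIII, toReal_add3 _ _ _ hD1fin hT3fin hT3fin]
  have rIV : t3 + s = x := by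
    rw [ht3, hs, ← ENNReal.toReal_add hT3fin hSq1fin, eIV]
  have rV : y + y + p = t1 + t1 + s + s := by
    rw [hy, hp, ht1, hs]
    rw [← ENNReal.toReal_add hYfin hYfin, ← ENNReal.toReal_add (ENNReal.add_ne_top.2 ⟨hYfin, hYfin⟩) hPfin]
    rw [eV]
    rw [ENNReal.toReal_add (by finiteness) hSq1fin,
      ENNReal.toReal_add (by finiteness) hSq1fin,
      ENNReal.toReal_add hT1fin hT1fin]
  -- bridge to the original statement
  have hgX : (∑' n : ℕ, (H (n + 1)) ^ 2 / ((n : ℝ) + 1) ^ q) = x :=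
    tsum_eq_SE_toReal hXnn hXfin
  have hgY : (∑' n : ℕ, H2 (n + 1) / ((n : ℝ) + 1) ^ q) = y :=
    tsum_eq_SE_toReal hYnn hYfin
  have hgS : S1 (q+1) = s := by
    rw [S1]
    exact tsum_eq_SE_toReal (hSnn (q+1)) hSq1fin
  have hgZ : (∑ j ∈ Finset.Icc 1 (q - 2), S1 (j + 1) * zetaVal (q - j))
      = ((q:ℝ) - 2) * s + d2 + d1 := by
    have hterm : ∀ j ∈ Finset.Icc 1 (q-2), S1 (j + 1) * zetaVal (q - j)
        = ((SE (fun n => H (n+1)/((n:ℝ)+1)^(j+1)) * SE (fun n => 1/((n:ℝ)+1)^(q-j)))).toReal := by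
      intro j hj
      obtain ⟨hj1, hj2⟩ := Finset.mem_Icc.1 hj
      have hfinS := hSfin (j+1) (by omega)
      have hfinz := hzfin (q-j) (by omega)
      rw [ENNReal.toReal_mul]
      congr 1
      · rw [S1]; exact tsum_eq_SE_toReal (hSnn (j+1)) hfinS
      · rw [zetaVal]; exact tsum_eq_SE_toReal (hznn (q-j)) hfinz
    rw [Finset.sum_congr rfl hterm]
    rw [← ENNReal.toReal_sum (fun j hj => by
      obtain ⟨hj1, hj2⟩ := Finset.mem_Icc.1 hj
      exact ENNReal.mul_ne_top (hSfin (j+1) (by omega)) (hzfin (q-j) (by omega)))]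
    rw [eVI]
    rw [toReal_add3 _ _ _ (by
        rw [nsmul_eq_mul]
        exact ENNReal.mul_ne_top (ENNReal.natCast_ne_top _) hSq1fin) hD2fin hD1fin]
    rw [nsmul_eq_mul, ENNReal.toReal_mul]
    rw [show ((q - 2 : ℕ) : ℝ≥0∞).toReal = ((q:ℝ) - 2) from by
      rw [ENNReal.toReal_natCast, Nat.cast_sub hq2]; push_cast; ring]
  rw [hgX, hgY, hgS, hgZ]
  linarith [rI, rII, rIII, rIV, rV]
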